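/- arXiv:1201.5534 — 2 statements merged into one kernel-verified Lean document; each statement's English description precedes it below -/
import Mathlib

section
/- Let x be a positive real number and d₁, …, dₙ real numbers such that dᵢ > -x for each i and ∑ dᵢ = 0. If the dᵢ are not all zero, then ∏ᵢ (x + dᵢ) < xⁿ. -/
open Finset

theorem prod_lt_pow_card_of_sum_eq_card_mul {ι : Type*} [Fintype ι] {z : ι → ℝ} {a : ℝ}
    (hz : ∀ i, 0 ≤ z i) (hsum : ∑ i, z i = Fintype.card ι * a) (hne : ∃ j, z j ≠ a) :
    ∏ i, z i < a ^ Fintype.card ι := by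
  set n := Fintype.card ι
  obtain ⟨j, hj⟩ := hne
  have : Nonempty ι := ⟨j⟩
  have hn0 : n ≠ 0 := Fintype.card_ne_zero
  have hn : (n : ℝ) ≠ 0 := Nat.cast_ne_zero.2 hn0
  have hmean : ∑ i, (n : ℝ)⁻¹ * z i = a := by
    rw [← mul_sum, hsum, inv_mul_cancel_left₀ hn]
  have hprod : 0 ≤ ∏ i, z i := prod_nonneg fun i _ => hz i
  have hgeom : ∏ i, z i ^ (n : ℝ)⁻¹ < a := by
    have amgm := (Real.geom_mean_lt_arith_mean_weighted_iff_of_pos' univ (fun _ => (n : ℝ)⁻¹) z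
      (fun _ _ => by positivity) (by simp [n, hn]) (fun i _ => hz i)).2
    rw [hmean] at amgm
    exact amgm ⟨j, mem_univ j, hj⟩
  rw [Real.finsetProd_rpow _ _ fun i _ => hz i] at hgeom
  calc ∏ i, z i = ((∏ i, z i) ^ (n : ℝ)⁻¹) ^ n :=
        (Real.rpow_inv_natCast_pow hprod hn0).symm
    _ < a ^ n := pow_lt_pow_left₀ hgeom (Real.rpow_nonneg hprod _) hn0

theorem stmt1_general (n : ℕ) (x : ℝ) (d : Fin n → ℝ)
    (hd : ∀ i, -x < d i) (hsum : ∑ i, d i = 0) (hne : ∃ i, d i ≠ 0) :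
    ∏ i, (x + d i) < x ^ n := by
  simpa using prod_lt_pow_card_of_sum_eq_card_mul (z := fun i => x + d i) (a := x)
    (fun i => by linarith [hd i]) (by simp [sum_add_distrib, hsum])
    (hne.imp fun i hi => by simpa using hi)

theorem stmt1 (n : ℕ) (x : ℝ) (hx : 0 < x) (d : Fin n → ℝ)
    (hd : ∀ i, -x < d i) (hsum : ∑ i, d i = 0) (hne : ∃ i, d i ≠ 0) :
    ∏ i, (x + d i) < x ^ n :=
  stmt1_general n x d hd hsum hne
end

section
/- Let x > 0 and d₁, …, dₙ real numbers with dᵢ > -x for each i and ∑ dᵢ = 0. Then ∏ᵢ (x + dᵢ) = xⁿ if and only if all dᵢ = 0. -/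
open Finset Real

/-- Strict AM–GM: sum `log t ≤ t - 1` over `t = a i / m`, with strict inequality at some `i`. -/
theorem Real.prod_lt_pow_card_of_sum_eq_card_mul {ι : Type*} {s : Finset ι} {a : ι → ℝ} {m : ℝ}
    (hm : 0 < m) (ha : ∀ i ∈ s, 0 < a i) (hsum : ∑ i ∈ s, a i = #s * m)
    (hne : ∃ i ∈ s, a i ≠ m) : ∏ i ∈ s, a i < m ^ #s := by
  have hlog : ∑ i ∈ s, log (a i / m) < ∑ i ∈ s, (a i / m - 1) := by
    obtain ⟨j, hj, hjm⟩ := hne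
    refine sum_lt_sum (fun i hi ↦ log_le_sub_one_of_pos (div_pos (ha i hi) hm))
      ⟨j, hj, log_lt_sub_one_of_pos (div_pos (ha j hj) hm) ?_⟩
    rwa [Ne, div_eq_one_iff_eq hm.ne']
  have hrhs : ∑ i ∈ s, (a i / m - 1) = 0 := by
    rw [sum_sub_distrib, ← sum_div, hsum]
    field_simp
    simp
  rw [hrhs, ← log_prod (fun i hi ↦ (div_pos (ha i hi) hm).ne'), prod_div_distrib,
    prod_const] at hlog
  have hpow : 0 < m ^ #s := pow_pos hm _
  rwa [log_neg_iff (div_pos (prod_pos ha) hpow), div_lt_one hpow] at hlog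

theorem stmt2 (n : ℕ) (x : ℝ) (hx : 0 < x) (d : Fin n → ℝ)
    (hd : ∀ i, -x < d i) (hsum : ∑ i, d i = 0) :
    ∏ i, (x + d i) = x ^ n ↔ ∀ i, d i = 0 := by
  refine ⟨fun hprod ↦ ?_, fun h ↦ by simp [h]⟩
  by_contra! ⟨j, hj⟩
  have hlt := Real.prod_lt_pow_card_of_sum_eq_card_mul (s := univ) (a := fun i ↦ x + d i) hx
    (fun i _ ↦ by linarith [hd i]) (by simp [sum_add_distrib, hsum])
    ⟨j, mem_univ j, by simpa using hj⟩
  simp only [card_univ, Fintype.card_fin] at hlt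
  exact hlt.ne hprod
end
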